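/- arXiv:1807.04005 — 4 statements merged into one kernel-verified Lean document; each statement's English description precedes it below -/
import Mathlib

section
/- Let p, q > 0 and r ∈ (0,4). Define the sequence t_0 = 1, t_k = (p + sqrt(q + r·t_{k-1}²))/2. Then t_k converges to (2p + Δ)/(4 - r), where Δ = sqrt(r·p² + (4-r)·q). -/
/-!
The step `x ↦ (p + √(q + r x²)) / 2` is a contraction with constant `√r / 2 < 1`, because
`x ↦ √(q + x²)` is `1`-Lipschitz for `q ≥ 0`. By the Banach fixed point theorem the sequence
converges to the unique fixed point, and solving `2L - p = √(q + r L²)` gives the stated value.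
-/

open Function

lemma sqrt_add_sq_le_sqrt_add_sq_add_abs_sub {a : ℝ} (ha : 0 ≤ a) (x y : ℝ) :
    √(a + x ^ 2) ≤ √(a + y ^ 2) + |x - y| := by
  have hS : √(a + y ^ 2) ^ 2 = a + y ^ 2 := Real.sq_sqrt (by positivity)
  have hyS : |y| ≤ √(a + y ^ 2) := Real.abs_le_sqrt (by linarith)
  have hcross : y * (x - y) ≤ √(a + y ^ 2) * |x - y| :=
    (le_abs_self _).trans <| (abs_mul y (x - y)).trans_le <|
      mul_le_mul_of_nonneg_right hyS (abs_nonneg _)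
  rw [Real.sqrt_le_iff]
  refine ⟨by positivity, ?_⟩
  nlinarith [sq_abs (x - y)]

lemma lipschitzWith_one_sqrt_add_sq {a : ℝ} (ha : 0 ≤ a) :
    LipschitzWith 1 (fun x : ℝ => √(a + x ^ 2)) :=
  LipschitzWith.of_le_add fun x y => by
    simpa only [Real.dist_eq] using sqrt_add_sq_le_sqrt_add_sq_add_abs_sub ha x y

noncomputable def fistaStep (p q r x : ℝ) : ℝ := (p + √(q + r * x ^ 2)) / 2

lemma contractingWith_fistaStep (p : ℝ) {q r : ℝ} (hq : 0 ≤ q) (hr : 0 ≤ r) (hr4 : r < 4) :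
    ContractingWith (√r / 2).toNNReal (fistaStep p q r) := by
  refine ⟨?_, LipschitzWith.of_dist_le' fun x y => ?_⟩
  · have : √r < 2 := (Real.sqrt_lt' two_pos).2 (by norm_num [hr4])
    exact Real.toNNReal_lt_one.2 (by linarith)
  · have hsq (z : ℝ) : q + r * z ^ 2 = q + (√r * z) ^ 2 := by rw [mul_pow, Real.sq_sqrt hr]
    have h := (lipschitzWith_one_sqrt_add_sq hq).dist_le_mul (√r * x) (√r * y)
    simp only [Real.dist_eq, NNReal.coe_one, one_mul, ← mul_sub, abs_mul,
      abs_of_nonneg (Real.sqrt_nonneg r)] at h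
    simp only [fistaStep, Real.dist_eq, hsq]
    rw [← sub_div, add_sub_add_left_eq_sub, abs_div, abs_two]
    linarith

lemma isFixedPt_fistaStep {p q r : ℝ} (hp : 0 ≤ p) (hq : 0 ≤ q) (hr : 0 ≤ r) (hr4 : r < 4) :
    IsFixedPt (fistaStep p q r) ((2 * p + √(r * p ^ 2 + (4 - r) * q)) / (4 - r)) := by
  set Δ := √(r * p ^ 2 + (4 - r) * q)
  set L := (2 * p + Δ) / (4 - r)
  have h4r : 0 < 4 - r := by linarith
  have hΔsq : Δ ^ 2 = r * p ^ 2 + (4 - r) * q := Real.sq_sqrt (by positivity)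
  have hroot : 2 * L - p = (r * p + 2 * Δ) / (4 - r) := by
    simp only [L]; field_simp; ring
  have hsq : q + r * L ^ 2 = (2 * L - p) ^ 2 := by
    rw [hroot]; simp only [L]; field_simp; linear_combination -(4 - r) * hΔsq
  have hL : √(q + r * L ^ 2) = 2 * L - p := by
    rw [hsq, Real.sqrt_sq (hroot ▸ by positivity)]
  simp only [IsFixedPt, fistaStep, hL]
  ring

theorem fista_t_limit_r_lt_four_general (p q r : ℝ) (hp : 0 < p) (hq : 0 < q)
    (hr0 : 0 < r) (hr4 : r < 4) (t : ℕ → ℝ)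
    (hrec : ∀ k, t (k + 1) = (p + Real.sqrt (q + r * (t k) ^ 2)) / 2) :
    Filter.Tendsto t Filter.atTop
      (nhds ((2 * p + Real.sqrt (r * p ^ 2 + (4 - r) * q)) / (4 - r))) := by
  have hf := contractingWith_fistaStep p hq.le hr0.le hr4
  have ht : t = fun n => (fistaStep p q r)^[n] (t 0) := by
    funext n
    induction n with
    | zero => rfl
    | succ n ih => rw [iterate_succ_apply', ← ih, hrec, fistaStep]
  rw [ht, hf.fixedPoint_unique (isFixedPt_fistaStep hp.le hq.le hr0.le hr4)]
  exact hf.tendsto_iterate_fixedPoint (t 0)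

theorem fista_t_limit_r_lt_four (p q r : ℝ) (hp : 0 < p) (hq : 0 < q)
    (hr0 : 0 < r) (hr4 : r < 4) (t : ℕ → ℝ) (ht0 : t 0 = 1)
    (hrec : ∀ k, t (k + 1) = (p + Real.sqrt (q + r * (t k) ^ 2)) / 2) :
    Filter.Tendsto t Filter.atTop
      (nhds ((2 * p + Real.sqrt (r * p ^ 2 + (4 - r) * q)) / (4 - r))) :=
  fista_t_limit_r_lt_four_general p q r hp hq hr0 hr4 t hrec
end

section
/- Let p ∈ (0,1] and 0 ≤ q ≤ (2-p)². Define t_0 = 1 and t_k = (p + sqrt(q + 4·t_{k-1}²))/2. Then for all k ≥ 1, t_k² - t_k ≤ t_{k-1}². -/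
/-!
Writing `s = t (k+1)` and `a = t k`, the recursion says `(2s - p)² = q + 4a²`, so the claim
`s² - s ≤ a²` is equivalent to `q ≤ p² + 4(1 - p)s`. Since every `t k` is at least `1` and
`p ≤ 1`, the right side is at least `p² + 4(1 - p) = (2 - p)² ≥ q`.
-/

theorem one_le_half_add_sqrt {p q a : ℝ} (hp : 0 ≤ p) (hq : 0 ≤ q) (ha : 1 ≤ a) :
    1 ≤ (p + √(q + 4 * a ^ 2)) / 2 := by
  have : 2 ≤ √(q + 4 * a ^ 2) := Real.le_sqrt_of_sq_le (by nlinarith)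
  linarith

theorem two_mul_half_add_sqrt_sub_sq {p q a : ℝ} (h : 0 ≤ q + 4 * a ^ 2) :
    (2 * ((p + √(q + 4 * a ^ 2)) / 2) - p) ^ 2 = q + 4 * a ^ 2 := by
  rw [show 2 * ((p + √(q + 4 * a ^ 2)) / 2) - p = √(q + 4 * a ^ 2) by ring]
  exact Real.sq_sqrt h

theorem sq_sub_self_le_sq_of_two_mul_sub_sq_eq {p q a s : ℝ} (hp : p ≤ 1)
    (hq : q ≤ (2 - p) ^ 2) (hs : 1 ≤ s) (hsa : (2 * s - p) ^ 2 = q + 4 * a ^ 2) :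
    s ^ 2 - s ≤ a ^ 2 := by
  nlinarith [mul_le_mul_of_nonneg_left hs (sub_nonneg.2 hp)]

theorem fista_mod_descent (p q : ℝ) (hp0 : 0 < p) (hp1 : p ≤ 1)
    (hq0 : 0 ≤ q) (hq : q ≤ (2 - p) ^ 2) (t : ℕ → ℝ) (ht0 : t 0 = 1)
    (hrec : ∀ k, t (k + 1) = (p + Real.sqrt (q + 4 * (t k) ^ 2)) / 2) :
    ∀ k, (t (k + 1)) ^ 2 - t (k + 1) ≤ (t k) ^ 2 := by
  have one_le : ∀ k, 1 ≤ t k := by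
    intro k
    induction k with
    | zero => exact ht0.ge
    | succ k ih => rw [hrec]; exact one_le_half_add_sqrt hp0.le hq0 ih
  intro k
  refine sq_sub_self_le_sq_of_two_mul_sub_sq_eq hp1 hq (one_le (k + 1)) ?_
  rw [hrec]
  exact two_mul_half_add_sqrt_sub_sq (by positivity)
end

section
/- Let p ∈ (0,1] and q ≥ 0. Define t_0 = 1 and t_k = (p + sqrt(q + 4·t_{k-1}²))/2. Then for all k ≥ 0, t_k ≥ (k+1)·p/2. -/
lemma two_mul_le_sqrt_add_four_mul_sq {q : ℝ} (hq : 0 ≤ q) (x : ℝ) :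
    2 * x ≤ Real.sqrt (q + 4 * x ^ 2) :=
  calc 2 * x ≤ |2 * x| := le_abs_self _
    _ = Real.sqrt ((2 * x) ^ 2) := (Real.sqrt_sq_eq_abs _).symm
    _ ≤ Real.sqrt (q + 4 * x ^ 2) := Real.sqrt_le_sqrt (by nlinarith)

lemma add_mul_le_of_forall_add_le {t : ℕ → ℝ} {d : ℝ} (hstep : ∀ k, t k + d ≤ t (k + 1))
    (k : ℕ) : t 0 + k * d ≤ t k := by
  induction k with
  | zero => simp
  | succ k ih =>
    push_cast
    linarith [hstep k]

theorem fista_mod_t_lower_bound_general (p q : ℝ) (hp1 : p ≤ 1)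
    (hq : 0 ≤ q) (t : ℕ → ℝ) (ht0 : t 0 = 1)
    (hrec : ∀ k, t (k + 1) = (p + Real.sqrt (q + 4 * (t k) ^ 2)) / 2) :
    ∀ k : ℕ, t k ≥ (k + 1) * p / 2 := by
  have hstep : ∀ k, t k + p / 2 ≤ t (k + 1) := fun k => by
    rw [hrec k]
    linarith [two_mul_le_sqrt_add_four_mul_sq hq (t k)]
  intro k
  linarith [add_mul_le_of_forall_add_le hstep k]

theorem fista_mod_t_lower_bound (p q : ℝ) (hp0 : 0 < p) (hp1 : p ≤ 1)
    (hq : 0 ≤ q) (t : ℕ → ℝ) (ht0 : t 0 = 1)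
    (hrec : ∀ k, t (k + 1) = (p + Real.sqrt (q + 4 * (t k) ^ 2)) / 2) :
    ∀ k : ℕ, t k ≥ (k + 1) * p / 2 :=
  fista_mod_t_lower_bound_general p q hp1 hq t ht0 hrec
end

section
/- Let F : ℝⁿ → ℝ be a convex differentiable function whose gradient is L-Lipschitz, R : ℝⁿ → ℝ ∪ {+∞} proper closed convex, Φ = R + F, and γ = 1/L. For any y ∈ ℝⁿ, let x⁺ = prox_{γR}(y - γ∇F(y)). Then for every x ∈ ℝⁿ, Φ(x) - Φ(x⁺) ≥ (L/2)·‖x⁺ - y‖² + L·⟨y - x, x⁺ - y⟩. -/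
/-!
Convexity of `F` bounds `F x` from below by its linearization at `y`, and the Lipschitz gradient
bounds `F x⁺` from above by the linearization plus `(L/2)‖x⁺ - y‖²`. Minimality of `x⁺` for the
prox objective, tested along the segment towards `x` and using convexity of `R`, gives the
variational inequality `⟪(y - γ∇F(y)) - x⁺, x - x⁺⟫ ≤ γ (R x - R x⁺)`. Adding the three
inequalities and using `γ = 1/L` yields the claim.
-/

open Set Filter Topology AffineMap InnerProductSpace NNReal

theorem nonneg_of_forall_mem_Ioc_nonneg_add_mul {a b : ℝ}
    (h : ∀ t ∈ Ioc (0 : ℝ) 1, 0 ≤ a + t * b) : 0 ≤ a := by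
  have hlim : Tendsto (fun t => a + t * b) (𝓝[>] 0) (𝓝 a) :=
    ((show Continuous fun t : ℝ => a + t * b by fun_prop).tendsto' 0 a (by simp)).mono_left
      nhdsWithin_le_nhds
  exact ge_of_tendsto hlim (eventually_of_mem (Ioc_mem_nhdsGT zero_lt_one) h)

theorem EReal.exists_coe_of_coe_add_mul_le {p q γ : ℝ} (hγ : 0 < γ) {a b : EReal}
    (h : (p : EReal) + γ * a ≤ q + γ * b) (ha : a ≠ ⊥) (hb : b ≠ ⊤) :
    ∃ a' b' : ℝ, a = a' ∧ b = b' := by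
  induction a using EReal.rec <;> induction b using EReal.rec <;>
    simp_all [EReal.coe_mul_top_of_pos hγ, EReal.coe_mul_bot_of_pos hγ, ← EReal.coe_mul,
      ← EReal.coe_add]

section NormedSpace

variable {E : Type*} [NormedAddCommGroup E] [NormedSpace ℝ E]

theorem HasFDerivAt.hasDerivAt_comp_lineMap {f : E → ℝ} {f' : E →L[ℝ] ℝ} {x y : E} {t : ℝ}
    (hf : HasFDerivAt f f' (lineMap (k := ℝ) y x t)) :
    HasDerivAt (fun t : ℝ => f (lineMap y x t)) (f' (x - y)) t :=
  hf.comp_hasDerivAt t hasDerivAt_lineMap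

theorem ConvexOn.add_fderiv_sub_le {f : E → ℝ} {f' : E →L[ℝ] ℝ} {x y : E}
    (hf : ConvexOn ℝ univ f) (hf' : HasFDerivAt f f' y) : f y + f' (x - y) ≤ f x := by
  have hline : ConvexOn ℝ univ (fun t : ℝ => f (lineMap y x t)) :=
    hf.comp_affineMap (lineMap y x)
  have hd : HasDerivAt (fun t : ℝ => f (lineMap y x t)) (f' (x - y)) 0 :=
    HasFDerivAt.hasDerivAt_comp_lineMap (by simpa using hf')
  have := hline.le_slope_of_hasDerivAt (mem_univ 0) (mem_univ 1) zero_lt_one hd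
  simp only [slope_def_field, lineMap_apply_zero, lineMap_apply_one, sub_zero, div_one] at this
  linarith

theorem LipschitzWith.le_add_fderiv_sub_add_sq {f : E → ℝ} {f' : E → E →L[ℝ] ℝ} {K : ℝ≥0}
    (hf : ∀ x, HasFDerivAt f (f' x) x) (hf' : LipschitzWith K f') (x y : E) :
    f x ≤ f y + f' y (x - y) + K / 2 * ‖x - y‖ ^ 2 := by
  set ψ : ℝ → ℝ := fun t => f (lineMap y x t) - t * f' y (x - y) - K / 2 * ‖x - y‖ ^ 2 * t ^ 2
  have hψ : ∀ t, HasDerivAt ψ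
      (f' (lineMap y x t) (x - y) - f' y (x - y) - K * ‖x - y‖ ^ 2 * t) t := by
    intro t
    have := (((hf (lineMap y x t)).hasDerivAt_comp_lineMap (x := x) (y := y)).sub
      ((hasDerivAt_id t).mul_const (f' y (x - y)))).sub
      ((hasDerivAt_pow 2 t).const_mul (K / 2 * ‖x - y‖ ^ 2))
    refine this.congr_deriv ?_
    simp only [one_mul, Nat.cast_ofNat, Nat.add_one_sub_one, pow_one, sub_right_inj]
    ring
  have hψ_nonpos : ∀ t ∈ interior (Icc (0 : ℝ) 1),
      f' (lineMap y x t) (x - y) - f' y (x - y) - K * ‖x - y‖ ^ 2 * t ≤ 0 := by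
    intro t ht
    rw [interior_Icc] at ht
    have hdist : ‖f' (lineMap y x t) - f' y‖ ≤ K * (t * ‖x - y‖) := by
      have := hf'.dist_le_mul (lineMap y x t) y
      rwa [dist_lineMap_left, dist_comm y x, dist_eq_norm, dist_eq_norm,
        Real.norm_of_nonneg ht.1.le] at this
    rw [sub_nonpos]
    calc f' (lineMap y x t) (x - y) - f' y (x - y) = (f' (lineMap y x t) - f' y) (x - y) := rfl
      _ ≤ ‖f' (lineMap y x t) - f' y‖ * ‖x - y‖ :=
        le_of_abs_le ((f' (lineMap y x t) - f' y).le_opNorm _)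
      _ ≤ K * (t * ‖x - y‖) * ‖x - y‖ := by gcongr
      _ = K * ‖x - y‖ ^ 2 * t := by ring
  have hanti : AntitoneOn ψ (Icc 0 1) :=
    antitoneOn_of_hasDerivWithinAt_nonpos (convex_Icc 0 1)
      (fun t _ => (hψ t).continuousAt.continuousWithinAt) (fun t _ => (hψ t).hasDerivWithinAt)
      hψ_nonpos
  have := hanti (left_mem_Icc.2 zero_le_one) (right_mem_Icc.2 zero_le_one) zero_le_one
  simp only [ψ, lineMap_apply_zero, lineMap_apply_one] at this
  linarith

end NormedSpace

section InnerProductSpace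

variable {E : Type*} [NormedAddCommGroup E] [InnerProductSpace ℝ E]

theorem inner_sub_le_of_forall_lineMap {z p x : E} {c : ℝ}
    (h : ∀ t ∈ Ioc (0 : ℝ) 1, 1 / 2 * ‖p - z‖ ^ 2 ≤ 1 / 2 * ‖lineMap p x t - z‖ ^ 2 + t * c) :
    inner ℝ (z - p) (x - p) ≤ c := by
  have hslope : ∀ t ∈ Ioc (0 : ℝ) 1,
      0 ≤ (inner ℝ (p - z) (x - p) + c) + t * (‖x - p‖ ^ 2 / 2) := by
    intro t ht
    have hexp : lineMap p x t - z = (p - z) + t • (x - p) := by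
      rw [lineMap_apply_module']; abel
    have := h t ht
    rw [hexp, norm_add_sq_real, real_inner_smul_right, norm_smul,
      Real.norm_of_nonneg ht.1.le] at this
    nlinarith [ht.1]
  have := nonneg_of_forall_mem_Ioc_nonneg_add_mul hslope
  rw [← neg_sub p z, inner_neg_left]
  linarith

theorem inner_sub_le_of_forall_prox_le {R : E → EReal}
    (hR : ∀ x z : E, ∀ s u : ℝ, 0 ≤ s → 0 ≤ u → s + u = 1 →
      R (s • x + u • z) ≤ (s : EReal) * R x + (u : EReal) * R z)
    {γ a b : ℝ} (hγ : 0 < γ) {z p x : E}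
    (hp : ∀ w, (((1 : ℝ) / 2 * ‖p - z‖ ^ 2 : ℝ) : EReal) + (γ : EReal) * R p ≤
      (((1 : ℝ) / 2 * ‖w - z‖ ^ 2 : ℝ) : EReal) + (γ : EReal) * R w)
    (ha : R p = a) (hb : R x = b) :
    inner ℝ (z - p) (x - p) ≤ γ * (b - a) := by
  refine inner_sub_le_of_forall_lineMap fun t ht => ?_
  have hconv : R (lineMap p x t) ≤ ((1 - t) * a + t * b : ℝ) := by
    have := hR p x (1 - t) t (sub_nonneg.2 ht.2) ht.1.le (sub_add_cancel 1 t)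
    rwa [← lineMap_apply_module, ha, hb] at this
  have := (hp (lineMap p x t)).trans
    (add_le_add_right (mul_le_mul_of_nonneg_left hconv (EReal.coe_nonneg.2 hγ.le)) _)
  rw [ha] at this
  norm_cast at this
  linarith

theorem fista_descent_of_bounds {L γ a b Fx Fxp Fy : ℝ} {g x y xp : E} (hLγ : L * γ = 1)
    (hL : 0 ≤ L) (hprox : inner ℝ (y - γ • g - xp) (x - xp) ≤ γ * (b - a))
    (hconv : Fy + inner ℝ g (x - y) ≤ Fx)
    (hsmooth : Fxp ≤ Fy + inner ℝ g (xp - y) + L / 2 * ‖xp - y‖ ^ 2) :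
    L / 2 * ‖xp - y‖ ^ 2 + L * inner ℝ (y - x) (xp - y) + (a + Fxp) ≤ b + Fx := by
  have hprox' := mul_le_mul_of_nonneg_left hprox hL
  simp only [norm_sub_sq_real, inner_sub_left, inner_sub_right, real_inner_smul_left,
    real_inner_self_eq_norm_sq] at *
  rw [real_inner_comm y xp, real_inner_comm x xp, real_inner_comm y x] at *
  linear_combination hconv + hsmooth + hprox' + (b - a + inner ℝ g x - inner ℝ g xp) * hLγ

end InnerProductSpace

theorem fista_descent_lemma_general (n : ℕ) (L : ℝ) (hL : 0 < L)
    (F : EuclideanSpace ℝ (Fin n) → ℝ) (F' : EuclideanSpace ℝ (Fin n) → EuclideanSpace ℝ (Fin n))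
    (hFconv : ConvexOn ℝ Set.univ F)
    (hFgrad : ∀ x, HasGradientAt F (F' x) x)
    (hFlip : LipschitzWith (Real.toNNReal L) F')
    (R : EuclideanSpace ℝ (Fin n) → EReal)
    (hRconv : ∀ x z : EuclideanSpace ℝ (Fin n), ∀ s u : ℝ, 0 ≤ s → 0 ≤ u → s + u = 1 →
      R (s • x + u • z) ≤ (s : EReal) * R x + (u : EReal) * R z)
    (γ : ℝ) (hγ : γ = 1 / L)
    (y xp : EuclideanSpace ℝ (Fin n))
    (hprox : ∀ x : EuclideanSpace ℝ (Fin n),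
      (((1 : ℝ) / 2 * ‖xp - (y - γ • F' y)‖ ^ 2 : ℝ) : EReal) + (γ : EReal) * R xp ≤
        (((1 : ℝ) / 2 * ‖x - (y - γ • F' y)‖ ^ 2 : ℝ) : EReal) + (γ : EReal) * R x) :
    ∀ x : EuclideanSpace ℝ (Fin n),
      ((L / 2 * ‖xp - y‖ ^ 2 + L * (inner ℝ (y - x) (xp - y) : ℝ) : ℝ) : EReal) +
          (R xp + (F xp : EReal)) ≤ R x + (F x : EReal) := by
  intro x
  have hγpos : 0 < γ := hγ ▸ one_div_pos.2 hL
  obtain hxtop | hxtop := eq_or_ne (R x) ⊤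
  · simp [hxtop]
  obtain hxpbot | hxpbot := eq_or_ne (R xp) ⊥
  · simp [hxpbot]
  obtain ⟨a, b, ha, hb⟩ := EReal.exists_coe_of_coe_add_mul_le hγpos (hprox x) hxpbot hxtop
  have hF' : ∀ x, HasFDerivAt F ((toDual ℝ _ ∘ F') x) x := fun x => (hFgrad x).hasFDerivAt
  have hFlip' : LipschitzWith (Real.toNNReal L) (toDual ℝ _ ∘ F') := by
    simpa only [one_mul] using (toDual ℝ (EuclideanSpace ℝ (Fin n))).lipschitz.comp hFlip
  have hconv := hFconv.add_fderiv_sub_le (x := x) (hF' y)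
  have hsmooth := hFlip'.le_add_fderiv_sub_add_sq hF' xp y
  simp only [Function.comp_apply, toDual_apply_apply, Real.coe_toNNReal L hL.le] at hconv hsmooth
  rw [ha, hb]
  exact_mod_cast fista_descent_of_bounds (by rw [hγ]; field_simp) hL.le
    (inner_sub_le_of_forall_prox_le hRconv hγpos hprox ha hb) hconv hsmooth

/-- FISTA key descent lemma (Beck–Teboulle, Lemma 2.3). `R` is extended
real-valued (proper, never `⊥`, convex, lower semicontinuous), `F` is convex
differentiable with `L`-Lipschitz gradient, `γ = 1/L`, and `x⁺` is
`prox_{γR}(y - γ∇F(y))`, characterized as a minimizer. -/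
theorem fista_descent_lemma (n : ℕ) (L : ℝ) (hL : 0 < L)
    (F : EuclideanSpace ℝ (Fin n) → ℝ) (F' : EuclideanSpace ℝ (Fin n) → EuclideanSpace ℝ (Fin n))
    (hFconv : ConvexOn ℝ Set.univ F)
    (hFgrad : ∀ x, HasGradientAt F (F' x) x)
    (hFlip : LipschitzWith (Real.toNNReal L) F')
    (R : EuclideanSpace ℝ (Fin n) → EReal)
    (hRproper : ∃ x, R x ≠ ⊤) (hRnbot : ∀ x, R x ≠ ⊥)
    (hRconv : ∀ x z : EuclideanSpace ℝ (Fin n), ∀ s u : ℝ, 0 ≤ s → 0 ≤ u → s + u = 1 →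
      R (s • x + u • z) ≤ (s : EReal) * R x + (u : EReal) * R z)
    (hRlsc : LowerSemicontinuous R)
    (γ : ℝ) (hγ : γ = 1 / L)
    (y xp : EuclideanSpace ℝ (Fin n))
    (hprox : ∀ x : EuclideanSpace ℝ (Fin n),
      (((1 : ℝ) / 2 * ‖xp - (y - γ • F' y)‖ ^ 2 : ℝ) : EReal) + (γ : EReal) * R xp ≤
        (((1 : ℝ) / 2 * ‖x - (y - γ • F' y)‖ ^ 2 : ℝ) : EReal) + (γ : EReal) * R x) :
    ∀ x : EuclideanSpace ℝ (Fin n),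
      ((L / 2 * ‖xp - y‖ ^ 2 + L * (inner ℝ (y - x) (xp - y) : ℝ) : ℝ) : EReal) +
          (R xp + (F xp : EReal)) ≤ R x + (F x : EReal) :=
  fista_descent_lemma_general n L hL F F' hFconv hFgrad hFlip R hRconv γ hγ y xp hprox
end
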